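/- arXiv:2302.14517 — 2 statements merged into one kernel-verified Lean document; each statement's English description precedes it below -/
import Mathlib

section
/- Let x_1,...,x_k be points and for each j let Z_1^{(j)},...,Z_m^{(j)} be Bernoulli(p_j) indicators obtained from a common set of m i.i.d. model samples, with p̂_j their sample means. Then for any ρ ∈ (0,1], with probability at least 1−ρ, max over j of |μ̂(x_j) − μ(x_j)| ≤ 1/(m−1) + (4m/(m−1))·√(log(2k/ρ)/(2m))·(1 + √(log(2k/ρ)/(2m))), where μ(x_j) = 4p_j(1−p_j) and μ̂(x_j) = 4(m/(m−1))·p̂_j(1−p̂_j). -/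
/-!
By Hoeffding's inequality each sample mean `p̂ⱼ` of `m` independent `{0,1}`-valued variables
satisfies `|p̂ⱼ - pⱼ| ≤ η` outside an event of probability `2 exp (-2 m η²)`, which equals `ρ / k`
for `η = √(log (2k/ρ) / (2m))`; a union bound over the `k` points makes all these deviations
small with probability at least `1 - ρ`. On that event the bound is deterministic, from
`m p̂ (1 - p̂) - (m - 1) p (1 - p) = m (p̂ - p) (1 - p̂ - p) + p (1 - p)` together with
`|1 - p̂ - p| ≤ 1` and `p (1 - p) ≤ 1/4`.
-/

open MeasureTheory ProbabilityTheory Real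
open scoped NNReal

section

variable {Ω : Type*} [MeasurableSpace Ω] {μ : Measure Ω}

lemma integral_eq_measureReal_of_eq_zero_or_eq_one {Z : Ω → ℝ}
    (hZ : Measurable Z) (hval : ∀ ω, Z ω = 0 ∨ Z ω = 1) : μ[Z] = μ.real {ω | Z ω = 1} := by
  have hind : Z = {ω | Z ω = 1}.indicator 1 := by
    funext ω
    rcases hval ω with h | h <;> simp [h]
  conv_lhs => rw [hind]
  exact integral_indicator_one (hZ (measurableSet_singleton 1))

variable [IsProbabilityMeasure μ]

lemma measureReal_abs_sum_sub_integral_ge_le_of_iIndepFun {ι : Type*} {X : ι → Ω → ℝ}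
    (hindep : iIndepFun X μ) (hmeas : ∀ i, Measurable (X i)) {a b : ℝ}
    (hab : ∀ i, ∀ᵐ ω ∂μ, X i ω ∈ Set.Icc a b) (s : Finset ι) {ε : ℝ} (hε : 0 ≤ ε) :
    μ.real {ω | ε ≤ |∑ i ∈ s, (X i ω - μ[X i])|} ≤
      2 * exp (-2 * ε ^ 2 / (s.card * (b - a) ^ 2)) := by
  have hsubG (i : ι) : HasSubgaussianMGF (fun ω ↦ X i ω - μ[X i]) ((‖b - a‖₊ / 2) ^ 2) μ :=
    hasSubgaussianMGF_of_mem_Icc (hmeas i).aemeasurable (hab i)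
  have hcentered : iIndepFun (fun i ω ↦ X i ω - μ[X i]) μ :=
    hindep.comp (fun i (y : ℝ) ↦ y - ∫ ω, X i ω ∂μ) fun _ ↦ measurable_id.sub_const _
  have hexponent : -ε ^ 2 / (2 * ((∑ _i ∈ s, (‖b - a‖₊ / 2) ^ 2 : ℝ≥0) : ℝ)) =
      -2 * ε ^ 2 / (s.card * (b - a) ^ 2) := by
    push_cast
    simp only [Finset.sum_const, nsmul_eq_mul, Real.norm_eq_abs, div_pow, sq_abs]
    rw [show (2 : ℝ) * (s.card * ((b - a) ^ 2 / 2 ^ 2)) = s.card * (b - a) ^ 2 / 2 by ring,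
      div_div_eq_mul_div]
    ring
  have hupper := HasSubgaussianMGF.measure_sum_ge_le_of_iIndepFun hcentered
    (s := s) (fun i _ ↦ hsubG i) hε
  have hlower := HasSubgaussianMGF.measure_sum_ge_le_of_iIndepFun
    (hcentered.comp (fun _ (x : ℝ) ↦ -x) fun _ ↦ measurable_neg) (s := s)
    (fun i _ ↦ (hsubG i).neg) hε
  rw [hexponent] at hupper hlower
  calc μ.real {ω | ε ≤ |∑ i ∈ s, (X i ω - μ[X i])|}
      ≤ μ.real ({ω | ε ≤ ∑ i ∈ s, (X i ω - μ[X i])} ∪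
          {ω | ε ≤ ∑ i ∈ s, -(X i ω - μ[X i])}) := by
        refine measureReal_mono fun ω (hω : ε ≤ |_|) ↦ ?_
        simp only [Finset.sum_neg_distrib]
        exact le_abs.mp hω
    _ ≤ _ := (measureReal_union_le _ _).trans (by simpa [two_mul] using add_le_add hupper hlower)

lemma measureReal_abs_sampleMean_sub_ge_le {m : ℕ} {Z : Fin m → Ω → ℝ} (hindep : iIndepFun Z μ)
    (hmeas : ∀ i, Measurable (Z i)) (hval : ∀ i ω, Z i ω = 0 ∨ Z i ω = 1) {p : ℝ} (hp : 0 ≤ p)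
    (hbern : ∀ i, μ {ω | Z i ω = 1} = ENNReal.ofReal p) {η : ℝ} (hη : 0 ≤ η) :
    μ.real {ω | η ≤ |(1 / (m : ℝ)) * ∑ i, Z i ω - p|} ≤ 2 * exp (-2 * m * η ^ 2) := by
  have hmean (i : Fin m) : μ[Z i] = p := by
    rw [integral_eq_measureReal_of_eq_zero_or_eq_one (hmeas i) (hval i), measureReal_def,
      hbern i, ENNReal.toReal_ofReal hp]
  have hunit (i : Fin m) : ∀ᵐ ω ∂μ, Z i ω ∈ Set.Icc (0 : ℝ) 1 :=
    ae_of_all _ fun ω ↦ by rcases hval i ω with h | h <;> simp [h]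
  have hsum (ω : Ω) : ∑ i, (Z i ω - μ[Z i]) = m * ((1 / (m : ℝ)) * ∑ i, Z i ω - p) := by
    rcases eq_or_ne m 0 with rfl | hm
    · simp
    · simp only [hmean, Finset.sum_sub_distrib, Finset.sum_const, Finset.card_univ,
        Fintype.card_fin, nsmul_eq_mul]
      field_simp
  calc μ.real {ω | η ≤ |(1 / (m : ℝ)) * ∑ i, Z i ω - p|}
      ≤ μ.real {ω | m * η ≤ |∑ i, (Z i ω - μ[Z i])|} := by
        refine measureReal_mono fun ω (hω : η ≤ |_|) ↦ ?_
        show m * η ≤ |_|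
        rw [hsum, abs_mul, Nat.abs_cast]
        gcongr
    _ ≤ 2 * exp (-2 * (m * η) ^ 2 / ((Finset.univ : Finset (Fin m)).card * (1 - 0) ^ 2)) :=
        measureReal_abs_sum_sub_integral_ge_le_of_iIndepFun hindep hmeas hunit _ (by positivity)
    _ = 2 * exp (-2 * m * η ^ 2) := by
        rcases eq_or_ne (m : ℝ) 0 with hm | hm
        · simp [hm]
        · simp only [Finset.card_univ, Fintype.card_fin, sub_zero, one_pow, mul_one]
          field_simp

lemma one_sub_card_mul_le_measureReal_iInter {ι : Type*} [Fintype ι] {A : ι → Set Ω} {δ : ℝ}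
    (h : ∀ i, μ.real (A i)ᶜ ≤ δ) : 1 - Fintype.card ι * δ ≤ μ.real (⋂ i, A i) := by
  have hbad : μ.real (⋂ i, A i)ᶜ ≤ Fintype.card ι * δ := by
    rw [Set.compl_iInter]
    calc μ.real (⋃ i, (A i)ᶜ) ≤ ∑ i, μ.real (A i)ᶜ := measureReal_iUnion_fintype_le _
      _ ≤ ∑ _i : ι, δ := Finset.sum_le_sum fun i _ ↦ h i
      _ = Fintype.card ι * δ := by simp
  have hsplit := measureReal_union_le (μ := μ) (⋂ i, A i) (⋂ i, A i)ᶜ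
  rw [Set.union_compl_self, probReal_univ] at hsplit
  linarith

end

lemma one_div_mul_sum_mem_Icc {m : ℕ} {x : Fin m → ℝ} (hx : ∀ i, x i ∈ Set.Icc (0 : ℝ) 1) :
    (1 / (m : ℝ)) * ∑ i, x i ∈ Set.Icc (0 : ℝ) 1 := by
  have h0 : 0 ≤ ∑ i, x i := Finset.sum_nonneg fun i _ ↦ (hx i).1
  have h1 : ∑ i, x i ≤ m := by
    simpa using Finset.sum_le_sum fun i (_ : i ∈ Finset.univ) ↦ (hx i).2
  rw [one_div_mul_eq_div]
  exact ⟨by positivity, div_le_one_of_le₀ h1 (Nat.cast_nonneg m)⟩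

lemma abs_unbiased_disagreement_sub_le {m a b η : ℝ} (hm : 1 < m) (ha : a ∈ Set.Icc 0 1)
    (hb : b ∈ Set.Icc 0 1) (hab : |a - b| ≤ η) :
    |4 * (m / (m - 1)) * a * (1 - a) - 4 * b * (1 - b)| ≤ 1 / (m - 1) + 4 * m / (m - 1) * η := by
  obtain ⟨ha0, ha1⟩ := ha
  obtain ⟨hb0, hb1⟩ := hb
  have hm1 : 0 < m - 1 := sub_pos.mpr hm
  have hdecomp : 4 * (m / (m - 1)) * a * (1 - a) - 4 * b * (1 - b) =
      (4 * m * ((a - b) * (1 - a - b)) + 4 * (b * (1 - b))) / (m - 1) := by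
    field_simp
    ring
  have hcross : |(a - b) * (1 - a - b)| ≤ η := by
    rw [abs_mul]
    have : |1 - a - b| ≤ 1 := abs_le.mpr ⟨by linarith, by linarith⟩
    nlinarith [abs_nonneg (a - b), abs_nonneg (1 - a - b)]
  have hbernoulli_var : |4 * (b * (1 - b))| ≤ 1 := by
    rw [abs_of_nonneg (by positivity)]
    nlinarith [sq_nonneg (1 - 2 * b)]
  rw [hdecomp, abs_div, abs_of_pos hm1, div_le_iff₀ hm1]
  calc |4 * m * ((a - b) * (1 - a - b)) + 4 * (b * (1 - b))|
      ≤ 4 * m * |(a - b) * (1 - a - b)| + |4 * (b * (1 - b))| := by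
        grw [abs_add_le, abs_mul, abs_of_pos (by positivity : 0 < 4 * m)]
    _ ≤ 4 * m * η + 1 := by gcongr
    _ = _ := by field_simp; ring

lemma two_mul_exp_neg_two_mul_sqrt_log_div_sq {m k ρ : ℝ} (hm : 0 < m) (hk : 0 < k)
    (hρ : 0 < ρ) (hρk : ρ ≤ 2 * k) :
    2 * exp (-2 * m * sqrt (log (2 * k / ρ) / (2 * m)) ^ 2) = ρ / k := by
  have hlog : 0 ≤ log (2 * k / ρ) := log_nonneg ((one_le_div hρ).mpr hρk)
  rw [sq_sqrt (by positivity), show -2 * m * (log (2 * k / ρ) / (2 * m)) = -log (2 * k / ρ) by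
    field_simp, exp_neg, exp_log (by positivity)]
  field_simp

theorem multi_point_disagreement_estimation_error_bound_general
    {Ω : Type*} [MeasurableSpace Ω] (P : Measure Ω) [IsProbabilityMeasure P]
    (m k : ℕ) (hm : 2 ≤ m)
    (p : Fin k → ℝ) (hp : ∀ j, p j ∈ Set.Icc (0 : ℝ) 1)
    (Z : Fin k → Fin m → Ω → ℝ)
    (hmeas : ∀ j i, Measurable (Z j i))
    (hval : ∀ j i ω, Z j i ω = 0 ∨ Z j i ω = 1)
    (hindep : ∀ j, iIndepFun (Z j) P)
    (hbern : ∀ j i, P {ω | Z j i ω = 1} = ENNReal.ofReal (p j))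
    (ρ : ℝ) (hρ : ρ ∈ Set.Ioc (0 : ℝ) 1) :
    ENNReal.ofReal (1 - ρ) ≤
      P {ω | ∀ j : Fin k,
          |4 * ((m : ℝ) / ((m : ℝ) - 1)) *
              ((1 / (m : ℝ)) * ∑ i, Z j i ω) * (1 - (1 / (m : ℝ)) * ∑ i, Z j i ω)
            - 4 * p j * (1 - p j)|
          ≤ 1 / ((m : ℝ) - 1)
            + (4 * (m : ℝ) / ((m : ℝ) - 1)) * Real.sqrt (Real.log (2 * k / ρ) / (2 * m))
              * (1 + Real.sqrt (Real.log (2 * k / ρ) / (2 * m)))} := by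
  obtain ⟨hρ0, hρ1⟩ := hρ
  have hm1 : (1 : ℝ) < m := by exact_mod_cast hm
  set η := sqrt (log (2 * k / ρ) / (2 * m))
  have hgood : 1 - ρ ≤ P.real (⋂ j, {ω | |(1 / (m : ℝ)) * ∑ i, Z j i ω - p j| ≤ η}) := by
    refine le_trans ?_ (one_sub_card_mul_le_measureReal_iInter (δ := ρ / k) fun j ↦ ?_)
    · rcases eq_or_ne (k : ℝ) 0 with hk | hk <;> simp [hk, hρ0.le, mul_div_cancel₀]
    have hk : (1 : ℝ) ≤ k := Nat.one_le_cast.mpr j.pos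
    calc P.real {ω | |(1 / (m : ℝ)) * ∑ i, Z j i ω - p j| ≤ η}ᶜ
        ≤ P.real {ω | η ≤ |(1 / (m : ℝ)) * ∑ i, Z j i ω - p j|} :=
          measureReal_mono fun _ hω ↦ (not_le.mp (show ¬_ ≤ η from hω)).le
      _ ≤ 2 * exp (-2 * m * η ^ 2) := measureReal_abs_sampleMean_sub_ge_le (hindep j) (hmeas j)
          (hval j) (hp j).1 (hbern j) (sqrt_nonneg _)
      _ = ρ / k := two_mul_exp_neg_two_mul_sqrt_log_div_sq (by positivity) (by linarith) hρ0
          (by linarith)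
  refine ENNReal.ofReal_le_of_le_toReal (hgood.trans (measureReal_mono fun ω hω j ↦ ?_))
  have hmean := one_div_mul_sum_mem_Icc fun i ↦ show Z j i ω ∈ Set.Icc (0 : ℝ) 1 by
    rcases hval j i ω with h | h <;> simp [h]
  calc _ ≤ 1 / ((m : ℝ) - 1) + 4 * m / (m - 1) * η :=
        abs_unbiased_disagreement_sub_le hm1 hmean (hp j) (Set.mem_iInter.mp hω j)
    _ ≤ _ := by
        have hη : 0 ≤ η := sqrt_nonneg _
        have hc : 0 ≤ 4 * (m : ℝ) / (m - 1) := div_nonneg (by positivity) (by linarith)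
        nlinarith [mul_nonneg hc (mul_nonneg hη hη)]

/-- For k points with Bernoulli(p_j) indicators obtained from a common set of
m i.i.d. model samples, with probability at least 1-ρ the maximum over j of
|μ̂(x_j) - μ(x_j)| is at most
1/(m-1) + (4m/(m-1))·√(log(2k/ρ)/(2m))·(1 + √(log(2k/ρ)/(2m))). -/
theorem multi_point_disagreement_estimation_error_bound
    {Ω : Type*} [MeasurableSpace Ω] (P : Measure Ω) [IsProbabilityMeasure P]
    (m k : ℕ) (hm : 2 ≤ m) (hk : 1 ≤ k)
    (p : Fin k → ℝ) (hp : ∀ j, p j ∈ Set.Icc (0 : ℝ) 1)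
    (Z : Fin k → Fin m → Ω → ℝ)
    (hmeas : ∀ j i, Measurable (Z j i))
    (hval : ∀ j i ω, Z j i ω = 0 ∨ Z j i ω = 1)
    (hindep : ∀ j, iIndepFun (Z j) P)
    (hbern : ∀ j i, P {ω | Z j i ω = 1} = ENNReal.ofReal (p j))
    (ρ : ℝ) (hρ : ρ ∈ Set.Ioc (0 : ℝ) 1) :
    ENNReal.ofReal (1 - ρ) ≤
      P {ω | ∀ j : Fin k,
          |4 * ((m : ℝ) / ((m : ℝ) - 1)) *
              ((1 / (m : ℝ)) * ∑ i, Z j i ω) * (1 - (1 / (m : ℝ)) * ∑ i, Z j i ω)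
            - 4 * p j * (1 - p j)|
          ≤ 1 / ((m : ℝ) - 1)
            + (4 * (m : ℝ) / ((m : ℝ) - 1)) * Real.sqrt (Real.log (2 * k / ρ) / (2 * m))
              * (1 + Real.sqrt (Real.log (2 * k / ρ) / (2 * m)))} :=
  multi_point_disagreement_estimation_error_bound_general P m k hm p hp Z hmeas hval hindep hbern ρ
    hρ
end

section
/- For m ≥ 2, p ∈ [0,1], and α ∈ (0,1], if m ≥ 1 + (α + 2t(2+α) + 2√2·√(t(1+α)(2t+α)))/α² with t = log(2/ρ), then 1/(m−1) + (4m/(m−1))·η(1+η) ≤ α where η = √(t/(2m)). -/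
/-!
Since `2 m η² = t`, the left-hand side equals `(1 + 2t + 2√(2mt)) / (m - 1)`, so it suffices that
`u := α (m - 1) - (1 + 2t)` satisfies `u ≥ 0` and `u² ≥ 8 m t`. Multiplied by `α²`, this is a
quadratic inequality in `m - 1` whose larger root is exactly the threshold in the hypothesis.
-/

open Real

lemma four_mul_mul_sqrt_div_mul_one_add {M t : ℝ} (hM : 0 < M) (ht : 0 ≤ t) :
    4 * M * √(t / (2 * M)) * (1 + √(t / (2 * M))) = 2 * √(2 * M * t) + 2 * t := by
  have hsq : 2 * M * √(t / (2 * M)) ^ 2 = t := by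
    rw [sq_sqrt (by positivity)]
    field_simp
  have hscale : √(2 * M * t) = 2 * M * √(t / (2 * M)) := by
    rw [show 2 * M * t = (2 * M) ^ 2 * (t / (2 * M)) by field_simp,
      sqrt_mul (by positivity), sqrt_sq (by positivity)]
  rw [hscale]
  linear_combination 2 * hsq

lemma one_add_two_mul_add_two_mul_sqrt_le {α t M : ℝ} (hα : 0 < α) (ht : 0 ≤ t)
    (hM : α + 2 * t * (2 + α) + √(8 * t * (1 + α) * (2 * t + α)) ≤ α ^ 2 * (M - 1)) :
    1 + 2 * t + 2 * √(2 * M * t) ≤ α * (M - 1) := by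
  set D := 8 * t * (1 + α) * (2 * t + α)
  set u := α * (M - 1) - (1 + 2 * t)
  have hαu : 4 * t + √D ≤ α * u := by linear_combination hM
  have hu : 0 ≤ u := nonneg_of_mul_nonneg_right (by linarith [sqrt_nonneg D]) hα
  -- `D` is the discriminant of the quadratic, so this is `(α u - 4t)² ≥ D` rearranged
  have hD : D ≤ (α * u - 4 * t) ^ 2 := (sqrt_le_left (by linarith [sqrt_nonneg D])).1 (by linarith)
  have hquad : α ^ 2 * (8 * M * t) ≤ α ^ 2 * u ^ 2 := by linear_combination hD
  have hsqrt_le : √(8 * M * t) ≤ u := (sqrt_le_left hu).2 (le_of_mul_le_mul_left hquad (by positivity))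
  have h8 : √(8 * M * t) = 2 * √(2 * M * t) := by
    rw [show 8 * M * t = 2 ^ 2 * (2 * M * t) by ring, sqrt_mul (by positivity), sqrt_sq zero_le_two]
  linarith

theorem sample_complexity_bound_general
    (m : ℕ)
    (α ρ : ℝ) (hα : α ∈ Set.Ioc (0 : ℝ) 1) (hρ : ρ ∈ Set.Ioo (0 : ℝ) 1)
    (t : ℝ) (ht : t = Real.log (2 / ρ))
    (hmge : (m : ℝ) ≥ 1 + (α + 2 * t * (2 + α)
        + 2 * Real.sqrt 2 * Real.sqrt (t * (1 + α) * (2 * t + α))) / α ^ 2)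
    (η : ℝ) (hη : η = Real.sqrt (t / (2 * m))) :
    1 / ((m : ℝ) - 1) + (4 * (m : ℝ) / ((m : ℝ) - 1)) * η * (1 + η) ≤ α := by
  have hα0 : 0 < α := hα.1
  have ht0 : 0 ≤ t := ht ▸ (log_pos ((one_lt_div hρ.1).2 (by linarith [hρ.2]))).le
  have hsqrt : 2 * √2 * √(t * (1 + α) * (2 * t + α)) = √(8 * t * (1 + α) * (2 * t + α)) := by
    rw [show 8 * t * (1 + α) * (2 * t + α) = 2 ^ 2 * (2 * (t * (1 + α) * (2 * t + α))) by ring,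
      sqrt_mul (show (0 : ℝ) ≤ 2 ^ 2 by positivity), sqrt_sq zero_le_two, sqrt_mul zero_le_two,
      mul_assoc]
  have hroot : α + 2 * t * (2 + α) + √(8 * t * (1 + α) * (2 * t + α)) ≤ α ^ 2 * (m - 1) := by
    rw [hsqrt, ge_iff_le, ← le_sub_iff_add_le', div_le_iff₀ (by positivity)] at hmge
    linarith
  have hm1 : 0 < (m : ℝ) - 1 := by
    have := sqrt_nonneg (8 * t * (1 + α) * (2 * t + α))
    have : 0 ≤ t * (2 + α) := by positivity
    exact pos_of_mul_pos_right (by linarith) (sq_nonneg α)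
  have hexpand := four_mul_mul_sqrt_div_mul_one_add (by linarith : (0 : ℝ) < m) ht0
  rw [← hη] at hexpand
  calc 1 / ((m : ℝ) - 1) + (4 * (m : ℝ) / ((m : ℝ) - 1)) * η * (1 + η)
      = (1 + 4 * m * η * (1 + η)) / (m - 1) := by ring
    _ = (1 + 2 * t + 2 * √(2 * m * t)) / (m - 1) := by rw [hexpand]; ring
    _ ≤ α := (div_le_iff₀ hm1).2 (one_add_two_mul_add_two_mul_sqrt_le hα0 ht0 hroot)

/-- Sample-complexity closed form: for m ≥ 2, p ∈ [0,1], α ∈ (0,1], ρ ∈ (0,1),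
t = log(2/ρ), if m ≥ 1 + (α + 2t(2+α) + 2√2·√(t(1+α)(2t+α)))/α², then
1/(m-1) + (4m/(m-1))·η(1+η) ≤ α where η = √(t/(2m)). -/
theorem sample_complexity_bound
    (m : ℕ) (hm : 2 ≤ m) (p : ℝ) (hp : p ∈ Set.Icc (0 : ℝ) 1)
    (α ρ : ℝ) (hα : α ∈ Set.Ioc (0 : ℝ) 1) (hρ : ρ ∈ Set.Ioo (0 : ℝ) 1)
    (t : ℝ) (ht : t = Real.log (2 / ρ))
    (hmge : (m : ℝ) ≥ 1 + (α + 2 * t * (2 + α)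
        + 2 * Real.sqrt 2 * Real.sqrt (t * (1 + α) * (2 * t + α))) / α ^ 2)
    (η : ℝ) (hη : η = Real.sqrt (t / (2 * m))) :
    1 / ((m : ℝ) - 1) + (4 * (m : ℝ) / ((m : ℝ) - 1)) * η * (1 + η) ≤ α :=
  sample_complexity_bound_general m α ρ hα hρ t ht hmge η hη
end
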